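/- Let G be a finite abstract simplicial complex such that all unit spheres have the same Euler characteristic, i.e. there is a constant c with χ(S(x)) = c for all x ∈ G. Then either c = 0 or χ(G) = 0. -/
import Mathlib


open Finset Polynomial

namespace SphereFormula

variable {V : Type} [DecidableEq V]

/-- A finite abstract simplicial complex: a finite collection of nonempty finite sets
that is closed under taking nonempty subsets. -/
def IsComplex (G : Finset (Finset V)) : Prop :=
  ∀ x ∈ G, x.Nonempty ∧ ∀ y, y ⊆ x → y.Nonempty → y ∈ G

/-- `w x = (-1)^(dim x)` where `dim x = |x| - 1`. -/
def w (x : Finset V) : ℤ := (-1) ^ (x.card - 1)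

/-- Euler characteristic of a finite set of simplices: `χ(A) = Σ_{x ∈ A} w x`. -/
def chi (A : Finset (Finset V)) : ℤ := ∑ x ∈ A, w x

/-- The star `U(x) = {y ∈ G : x ⊆ y}`. -/
def star (G : Finset (Finset V)) (x : Finset V) : Finset (Finset V) :=
  G.filter fun y => x ⊆ y

/-- The unit ball `B(x) = {z ∈ G : z ⊆ y for some y ∈ U(x)}` (closure of the star). -/
def ball (G : Finset (Finset V)) (x : Finset V) : Finset (Finset V) :=
  G.filter fun z => ∃ y ∈ G, x ⊆ y ∧ z ⊆ y

/-- The unit sphere `S(x) = B(x) \ U(x)`. -/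
def sphere (G : Finset (Finset V)) (x : Finset V) : Finset (Finset V) :=
  ball G x \ star G x

/-- The vertex set of `G`: those `v` with `{v} ∈ G`. -/
def verts (G : Finset (Finset V)) : Finset V :=
  (G.biUnion id).filter fun v => {v} ∈ G

/-- Contractibility, defined inductively: a single vertex complex is contractible, and `G`
is contractible if there is `x ∈ G` with both `S(x)` and `G \ U(x)` contractible. -/
inductive Contractible : Finset (Finset V) → Prop where
  | point (v : V) : Contractible ({({v} : Finset V)} : Finset (Finset V))
  | step (G : Finset (Finset V)) (x : Finset V) (hx : x ∈ G)
      (hS : Contractible (sphere G x)) (hG : Contractible (G \ star G x)) :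
      Contractible G

mutual
  /-- `G` is a `d`-manifold (`d ≥ 0`): every unit sphere `S(x)` is a `(d-1)`-sphere. -/
  inductive IsManifold : ℤ → Finset (Finset V) → Prop where
    | mk (d : ℤ) (G : Finset (Finset V)) (hd : 0 ≤ d)
        (h : ∀ x ∈ G, IsSphere (d - 1) (sphere G x)) : IsManifold d G

  /-- `d`-spheres: the empty complex is the `(-1)`-sphere, and a `d`-sphere is a
  `d`-manifold `G` such that `G \ U(x)` is contractible for some `x ∈ G`. -/
  inductive IsSphere : ℤ → Finset (Finset V) → Prop where
    | empty : IsSphere (-1) (∅ : Finset (Finset V))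
    | mk (d : ℤ) (G : Finset (Finset V)) (hm : IsManifold d G)
        (h : ∃ x ∈ G, Contractible (G \ star G x)) : IsSphere d G
end

/-- The f-function `f_G(t) = 1 + Σ_{k ≥ 0} f_k(G) t^(k+1) = 1 + Σ_{x ∈ G} t^|x|`. -/
noncomputable def fPoly (G : Finset (Finset V)) : Polynomial ℚ :=
  1 + ∑ x ∈ G, Polynomial.X ^ x.card

/-- `F_H(t) = ∫_0^t f_H(s) ds = t + Σ_{k ≥ 0} f_k(H) t^(k+2)/(k+2)`. -/
noncomputable def FPoly (H : Finset (Finset V)) : Polynomial ℚ :=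
  Polynomial.X +
    ∑ x ∈ H, Polynomial.C (((x.card : ℚ) + 1)⁻¹) * Polynomial.X ^ (x.card + 1)

/-- The join `G + H = G ∪ H ∪ {x ∪ y : x ∈ G, y ∈ H}`. -/
def joinC (G H : Finset (Finset V)) : Finset (Finset V) :=
  G ∪ H ∪ (G ×ˢ H).image fun p => p.1 ∪ p.2

/-- The barycentric refinement: simplices are the nonempty chains in `(G, ⊆)`. -/
def bary (G : Finset (Finset V)) : Finset (Finset (Finset V)) :=
  G.powerset.filter fun c => c.Nonempty ∧ ∀ x ∈ c, ∀ y ∈ c, x ⊆ y ∨ y ⊆ x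

/-- `f` is locally injective: distinct vertices of a common simplex have distinct values. -/
def LocallyInjective (G : Finset (Finset V)) (f : V → ℤ) : Prop :=
  ∀ x ∈ G, ∀ v ∈ x, ∀ u ∈ x, v ≠ u → f v ≠ f u

omit [DecidableEq V] in
lemma two_le_card_of_mem_ne {z : Finset V} {v : V} (hvz : v ∈ z) (hne : z ≠ {v}) :
    2 ≤ z.card := by
  by_contra h
  push_neg at h
  have h1 : 1 ≤ z.card := Finset.card_pos.2 ⟨v, hvz⟩
  have : z.card = 1 := by omega
  obtain ⟨a, rfl⟩ := Finset.card_eq_one.1 this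
  simp only [Finset.mem_singleton] at hvz
  exact hne (by rw [hvz])

lemma chi_ball (G : Finset (Finset V)) (hG : IsComplex G) (x : Finset V) (hx : x ∈ G) :
    chi (ball G x) = 1 := by
  obtain ⟨v, hv⟩ := (hG x hx).1
  have hvb : ({v} : Finset V) ∈ ball G x := by
    refine mem_filter.2 ⟨(hG x hx).2 {v} (by simpa using hv) (singleton_nonempty v),
      ⟨x, hx, subset_refl x, Finset.singleton_subset_iff.2 hv⟩⟩
  have hzero : ∑ z ∈ (ball G x).erase {v}, w z = 0 := by
    refine Finset.sum_involution
      (fun z _ => if v ∈ z then z.erase v else insert v z) ?_ ?_ ?_ ?_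
    · intro z hz
      have hz' := Finset.mem_of_mem_erase hz
      have hne : z ≠ {v} := Finset.ne_of_mem_erase hz
      obtain ⟨hzG, y, hyG, hxy, hzy⟩ := mem_filter.1 hz'
      have hznon := (hG z hzG).1
      by_cases hvz : v ∈ z
      · have hc2 : 2 ≤ z.card := two_le_card_of_mem_ne hvz hne
        obtain ⟨k, hk⟩ : ∃ k, z.card = k + 2 := ⟨z.card - 2, by omega⟩
        simp only [hvz, if_true, w, Finset.card_erase_of_mem hvz, hk]
        have e1 : k + 2 - 1 = k + 1 := rfl
        have e2 : k + 1 - 1 = k := rfl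
        rw [e1, e2, pow_succ]
        ring
      · obtain ⟨k, hk⟩ : ∃ k, z.card = k + 1 :=
          ⟨z.card - 1, by have := Finset.card_pos.2 hznon; omega⟩
        simp only [hvz, if_false, w, Finset.card_insert_of_notMem hvz, hk]
        have e1 : k + 1 - 1 = k := rfl
        have e2 : k + 1 + 1 - 1 = k + 1 := rfl
        rw [e1, e2, pow_succ]
        ring
    · intro z hz hfz
      by_cases hvz : v ∈ z
      · simp only [hvz, if_true]
        intro h
        have h1 := Finset.card_erase_of_mem hvz
        rw [h] at h1
        have h2 : 1 ≤ z.card := Finset.card_pos.2 ⟨v, hvz⟩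
        omega
      · simp only [hvz, if_false]
        intro h
        exact hvz (h ▸ Finset.mem_insert_self v z)
    · intro z hz
      have hz' := Finset.mem_of_mem_erase hz
      have hne : z ≠ {v} := Finset.ne_of_mem_erase hz
      obtain ⟨hzG, y, hyG, hxy, hzy⟩ := mem_filter.1 hz'
      have hvy : v ∈ y := hxy hv
      by_cases hvz : v ∈ z
      all_goals simp only [hvz, if_true, if_false]
      · have hc2 : 2 ≤ z.card := two_le_card_of_mem_ne hvz hne
        have hnon : (z.erase v).Nonempty :=
          Finset.card_pos.1 (by rw [Finset.card_erase_of_mem hvz]; omega)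
        refine Finset.mem_erase.2 ⟨?_, mem_filter.2 ⟨(hG z hzG).2 _ (Finset.erase_subset v z) hnon,
          y, hyG, hxy, (Finset.erase_subset v z).trans hzy⟩⟩
        intro h
        have := Finset.notMem_erase v z
        rw [h] at this
        exact this (Finset.mem_singleton_self v)
      · have hsub : insert v z ⊆ y := Finset.insert_subset hvy hzy
        refine Finset.mem_erase.2 ⟨?_, mem_filter.2 ⟨(hG y hyG).2 _ hsub ⟨v, Finset.mem_insert_self v z⟩,
          y, hyG, hxy, hsub⟩⟩
        intro h
        have : z ⊆ {v} := by rw [← h]; exact Finset.subset_insert v z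
        obtain ⟨u, hu⟩ := (hG z hzG).1
        have := this hu
        simp only [Finset.mem_singleton] at this
        exact hvz (this ▸ hu)
    · intro z hz
      by_cases hvz : v ∈ z <;> simp [hvz, Finset.insert_erase, Finset.erase_insert]
  have : chi (ball G x) = w {v} + ∑ z ∈ (ball G x).erase {v}, w z :=
    (Finset.add_sum_erase _ _ hvb).symm
  rw [this, hzero, add_zero]
  simp [w]

lemma sum_w_chi_star (G : Finset (Finset V)) (hG : IsComplex G) :
    ∑ x ∈ G, w x * chi (star G x) = chi G := by
  have key : ∀ y ∈ G, ∑ x ∈ G.filter (· ⊆ y), w x = 1 := by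
    intro y hy
    have h1 : G.filter (· ⊆ y) = y.powerset.filter (·.Nonempty) := by
      ext z
      simp only [mem_filter, Finset.mem_powerset]
      constructor
      · rintro ⟨hzG, hzy⟩; exact ⟨hzy, (hG z hzG).1⟩
      · rintro ⟨hzy, hznon⟩; exact ⟨(hG y hy).2 z hzy hznon, hzy⟩
    rw [h1]
    have h0 : (∑ m ∈ y.powerset, (-1 : ℤ) ^ m.card) = 0 :=
      Finset.sum_powerset_neg_one_pow_card_of_nonempty (hG y hy).1
    have h2 : y.powerset = insert ∅ (y.powerset.filter (·.Nonempty)) := by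
      ext z
      simp only [Finset.mem_insert, Finset.mem_powerset, mem_filter, Finset.nonempty_iff_ne_empty]
      by_cases h : z = ∅ <;> simp [h]
    rw [h2, Finset.sum_insert (by simp)] at h0
    simp only [Finset.card_empty, pow_zero] at h0
    have h3 : ∑ m ∈ y.powerset.filter (·.Nonempty), (-1 : ℤ) ^ m.card = -1 := by linarith
    have h4 : ∀ m ∈ y.powerset.filter (·.Nonempty), w m = -(-1 : ℤ) ^ m.card := by
      intro m hm
      have hnon : m.Nonempty := (mem_filter.1 hm).2
      have h1 : 1 ≤ m.card := Finset.card_pos.2 hnon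
      simp only [w]
      have : m.card = (m.card - 1) + 1 := by omega
      rw [show (-1 : ℤ) ^ m.card = (-1) ^ ((m.card - 1) + 1) by rw [← this], pow_succ]
      ring
    rw [Finset.sum_congr rfl h4, Finset.sum_neg_distrib, h3]
    ring
  calc ∑ x ∈ G, w x * chi (star G x)
      = ∑ x ∈ G, ∑ y ∈ G.filter (x ⊆ ·), w x * w y := by
        refine Finset.sum_congr rfl fun x _ => ?_
        rw [chi, star, Finset.mul_sum]
    _ = ∑ y ∈ G, ∑ x ∈ G.filter (· ⊆ y), w x * w y := by
        rw [Finset.sum_sigma', Finset.sum_sigma']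
        refine Finset.sum_nbij' (fun p => ⟨p.2, p.1⟩) (fun p => ⟨p.2, p.1⟩) ?_ ?_ ?_ ?_ ?_ <;>
          simp only [Finset.mem_sigma, mem_filter] <;> tauto
    _ = ∑ y ∈ G, w y := by
        refine Finset.sum_congr rfl fun y hy => ?_
        rw [← Finset.sum_mul, key y hy, one_mul]
    _ = chi G := rfl

/-- if all unit spheres of `G` have the same Euler characteristic `c`,
then `c = 0` or `χ(G) = 0`. -/
theorem constant_sphere_chi {V : Type} [DecidableEq V] (G : Finset (Finset V))
    (hG : IsComplex G) (c : ℤ) (hc : ∀ x ∈ G, chi (sphere G x) = c) :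
    c = 0 ∨ chi G = 0 := by
  have hsub : ∀ x, star G x ⊆ ball G x := by
    intro x y hy
    obtain ⟨hyG, hxy⟩ := mem_filter.1 hy
    exact mem_filter.2 ⟨hyG, y, hyG, hxy, subset_refl y⟩
  have hsphere : ∀ x ∈ G, chi (sphere G x) = 1 - chi (star G x) := by
    intro x hx
    rw [sphere, chi, Finset.sum_sdiff_eq_sub (hsub x)]
    rw [show (∑ z ∈ ball G x, w z) = chi (ball G x) from rfl, chi_ball G hG x hx]
    rfl
  have key : c * chi G = 0 := by
    have : ∑ x ∈ G, w x * chi (sphere G x) = c * chi G := by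
      rw [Finset.sum_congr rfl fun x hx => by rw [hc x hx]]
      rw [← Finset.sum_mul, chi]
      ring
    rw [← this, Finset.sum_congr rfl fun x hx => by rw [hsphere x hx]]
    have : ∑ x ∈ G, w x * (1 - chi (star G x))
        = (∑ x ∈ G, w x) - ∑ x ∈ G, w x * chi (star G x) := by
      rw [← Finset.sum_sub_distrib]
      exact Finset.sum_congr rfl fun x _ => by ring
    rw [this, sum_w_chi_star G hG, chi, sub_self]
  rcases mul_eq_zero.1 key with h | h
  · exact Or.inl h
  · exact Or.inr h


end SphereFormula
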